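/- Let p be an odd prime and 0 ≤ s < n. In F_p[y_1,...,y_n]: [0,1,...,ŝ,...,n-1, n+2] = L_n · (Q_{n,n-1}^{p^2+p} Q_{n,s} − Q_{n,n-2}^{p^2} Q_{n,s} + Q_{n,s-2}^{p^2} − Q_{n,s-1}^p Q_{n,n-1}^{p^2}), with the convention Q_{n,t} = 0 for t < 0. -/

import Mathlib

open MvPolynomial Finset

/-- `br p e = det (y_i ^ (p ^ e_j))` in `F_p[y_1,…,y_n]`. -/
noncomputable def br (p : ℕ) {n : ℕ} (e : Fin n → ℕ) : MvPolynomial (Fin n) (ZMod p) :=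
  Matrix.det (Matrix.of fun i j : Fin n => (X i : MvPolynomial (Fin n) (ZMod p)) ^ p ^ e j)

/-- `L_n = [0,1,…,n-1]`. -/
noncomputable def Lpoly (p n : ℕ) : MvPolynomial (Fin n) (ZMod p) :=
  br p (fun j : Fin n => (j : ℕ))

/-- `L_{n,s} = [0,…,ŝ,…,n]`. -/
noncomputable def Ls (p n s : ℕ) : MvPolynomial (Fin n) (ZMod p) :=
  br p (fun j : Fin n => if (j : ℕ) < s then (j : ℕ) else (j : ℕ) + 1)

/-!
Laplace expansion of the Moore determinant of `(X_0, …, X_{n-1}, X_i)` along its last row,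
divided by `L_n`, gives `X_i ^ p ^ n = ∑_{t<n} (-1)^(n+t+1) Q_{n,t} X_i ^ p ^ t`; applying
Frobenius `k` times expresses `X_i ^ p ^ (n+k)` through the `X_i ^ p ^ (t+k)`. Expanding the
last column of `[0,…,ŝ,…,n-1, n+k]` accordingly, every determinant whose last exponent is
`< n` has a repeated column, except the one with exponent `s`, which is `± L_n`. This gives
`[0,…,ŝ,…,n-1, n+1]` and then `[0,…,ŝ,…,n-1, n+2]`.
-/

theorem Fin.val_succAbove {n : ℕ} (j : Fin (n + 1)) (b : Fin n) :
    (j.succAbove b : ℕ) = if (b : ℕ) < j then (b : ℕ) else (b : ℕ) + 1 := by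
  rcases lt_or_ge b.castSucc j with h | h
  · rw [Fin.succAbove_of_castSucc_lt _ _ h, if_pos (by simpa [Fin.lt_def] using h)]; rfl
  · rw [Fin.succAbove_of_le_castSucc _ _ h, if_neg (by simpa [Fin.le_def] using h)]; rfl

theorem pow_char_pow_add_eq_sum {R : Type*} [CommRing R] {p : ℕ} [ExpChar R p] {n : ℕ} {y : R}
    {Q : ℤ → R} (hQ : ∀ t < 0, Q t = 0)
    (hy : y ^ p ^ n = ∑ t ∈ range n, (-1) ^ (n + t + 1) * Q t * y ^ p ^ t) (k : ℕ) :
    y ^ p ^ (n + k) =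
      ∑ t ∈ range (n + k), (-1) ^ (n + t + k + 1) * Q (t - k) ^ p ^ k * y ^ p ^ t := by
  have hpk : p ^ k ≠ 0 := pow_ne_zero k (expChar_pos R p).ne'
  rw [add_comm n k, sum_range_add, sum_eq_zero, zero_add, pow_add, pow_mul', hy, sum_pow_char_pow]
  · refine sum_congr rfl fun t _ => ?_
    rw [mul_pow, mul_pow, pow_right_comm, neg_one_pow_expChar_pow, ← pow_mul, ← pow_add]
    push_cast
    rw [add_sub_cancel_left, add_comm k t, show n + (t + k) + k + 1 = n + t + 1 + 2 * k by ring,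
      pow_add _ (n + t + 1), pow_mul, neg_one_sq, one_pow, mul_one]
  · intro t ht
    rw [hQ _ (by simp at ht; omega), zero_pow hpk, mul_zero, zero_mul]

section MooreDet

variable {p n : ℕ}

noncomputable def mooreCol (p n v : ℕ) : Fin n → MvPolynomial (Fin n) (ZMod p) :=
  fun i => X i ^ p ^ v

theorem br_eq_detRowAlternating (e : Fin n → ℕ) :
    br p e = Matrix.detRowAlternating (fun j => mooreCol p n (e j)) := by
  rw [br, ← Matrix.det_transpose]
  rfl

theorem br_update_finset_sum {ι : Type*} (e : Fin n → ℕ) (c : Fin n) (w : ℕ) (S : Finset ι)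
    (a : ι → MvPolynomial (Fin n) (ZMod p)) (v : ι → ℕ)
    (hw : mooreCol p n w = ∑ t ∈ S, a t • mooreCol p n (v t)) :
    br p (Function.update e c w) = ∑ t ∈ S, a t * br p (Function.update e c (v t)) := by
  simp only [br_eq_detRowAlternating, ← Function.comp_def (mooreCol p n), Function.comp_update,
    hw, AlternatingMap.map_update_sum, AlternatingMap.map_update_smul, smul_eq_mul]

theorem br_update_eq_zero (e : Fin n → ℕ) {c j : Fin n} (hjc : j ≠ c) :
    br p (Function.update e c (e j)) = 0 := by
  rw [br_eq_detRowAlternating]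
  exact AlternatingMap.map_eq_zero_of_eq _ _ (i := j) (j := c) (by simp [hjc]) hjc

theorem br_comp_perm (e : Fin n → ℕ) (σ : Equiv.Perm (Fin n)) :
    br p (e ∘ σ) = Equiv.Perm.sign σ • br p e := by
  simp only [br_eq_detRowAlternating]
  exact AlternatingMap.map_perm _ (fun j => mooreCol p n (e j)) σ

theorem br_succAbove (j : Fin (n + 1)) :
    br p (fun b : Fin n => (j.succAbove b : ℕ)) = Ls p n j := by
  simp only [Ls, Fin.val_succAbove]

theorem Lpoly_ne_zero (hp : 1 < p) : Lpoly p n ≠ 0 := by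
  have : Fact (1 < p) := ⟨hp⟩
  set mono : (Fin n → ℕ) → Fin n →₀ ℕ := fun d => Finsupp.indicator univ fun i _ => d i
  have hmono : ∀ d d', mono d = mono d' → d = d' := fun d d' h =>
    funext fun i => by simpa [mono] using DFunLike.congr_fun h i
  have hdet : Lpoly p n =
      ∑ σ : Equiv.Perm (Fin n),
        Equiv.Perm.sign σ • monomial (mono fun i => p ^ (σ i : ℕ)) 1 := by
    rw [Lpoly, br, ← Matrix.det_transpose, Matrix.det_apply]
    simp [mono, prod_X_pow]
  intro h
  -- only `σ = 1` contributes to the coefficient of `∏ X_i ^ p ^ i`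
  have hcoeff := congrArg (coeff (mono fun i => p ^ (i : ℕ))) h
  rw [hdet, coeff_sum, sum_eq_single 1] at hcoeff
  · simp at hcoeff
  · intro σ _ hσ
    rw [coeff_smul, coeff_monomial, if_neg, smul_zero]
    intro hσ'
    refine hσ (Equiv.ext fun i => Fin.ext ?_)
    exact Nat.pow_right_injective hp (congrFun (hmono _ _ hσ') i)
  · simp

theorem Lpoly_mul_X_pow (i : Fin n) :
    Lpoly p n * X i ^ p ^ n = ∑ t ∈ range n, (-1) ^ (n + t + 1) * Ls p n t * X i ^ p ^ t := by
  set N : Matrix (Fin (n + 1)) (Fin (n + 1)) (MvPolynomial (Fin n) (ZMod p)) :=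
    Matrix.of fun a b => (Fin.lastCases (X i) X a : MvPolynomial (Fin n) (ZMod p)) ^ p ^ (b : ℕ)
  have hN : N.det = 0 :=
    Matrix.det_zero_of_row_eq (Fin.castSucc_lt_last i).ne (by ext; simp [N])
  have hminor (j : Fin (n + 1)) :
      (N.submatrix (Fin.last n).succAbove j.succAbove).det = Ls p n j := by
    rw [← br_succAbove]
    congr 1
    ext a b
    simp [N]
  have hL : Ls p n n = Lpoly p n := by simp [Ls, Lpoly]
  rw [Matrix.det_succ_row N (Fin.last n), Fin.sum_univ_castSucc] at hN
  simp only [hminor, N, Matrix.of_apply, Fin.lastCases_last, Fin.val_last, Fin.val_castSucc, hL,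
    ← two_mul, pow_mul, neg_one_sq, one_pow, one_mul] at hN
  rw [mul_comm, eq_neg_of_add_eq_zero_right hN, sum_range, ← sum_neg_distrib]
  refine sum_congr rfl fun t _ => ?_
  ring

theorem X_pow_eq_sum (hp : p.Prime) (Q : ℤ → MvPolynomial (Fin n) (ZMod p))
    (hQ : ∀ t : ℕ, t < n → Lpoly p n * Q t = Ls p n t) (i : Fin n) :
    X i ^ p ^ n = ∑ t ∈ range n, (-1) ^ (n + t + 1) * Q t * X i ^ p ^ t := by
  have : Fact p.Prime := ⟨hp⟩
  refine mul_left_cancel₀ (Lpoly_ne_zero hp.one_lt) ?_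
  rw [Lpoly_mul_X_pow, mul_sum]
  refine sum_congr rfl fun t ht => ?_
  rw [← hQ t (mem_range.1 ht)]
  ring

theorem br_update_add_eq_sum (hp : p.Prime) {Q : ℤ → MvPolynomial (Fin n) (ZMod p)}
    (hQ : ∀ t : ℕ, t < n → Lpoly p n * Q t = Ls p n t) (hQneg : ∀ t < 0, Q t = 0)
    (e : Fin n → ℕ) (c : Fin n) (k : ℕ) :
    br p (Function.update e c (n + k)) =
      ∑ t ∈ range (n + k), (-1) ^ (n + t + k + 1) * Q (t - k) ^ p ^ k *
        br p (Function.update e c t) := by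
  have : Fact p.Prime := ⟨hp⟩
  refine br_update_finset_sum e c _ _ _ _ (funext fun i => ?_)
  simp only [mooreCol, Finset.sum_apply, Pi.smul_apply, smul_eq_mul, mul_assoc]
  simpa only [mul_assoc] using pow_char_pow_add_eq_sum hQneg (X_pow_eq_sum hp Q hQ i) k

end MooreDet

section SkipExp

variable {p m s : ℕ}

def skipExp (n s : ℕ) (j : Fin n) : ℕ :=
  if (j : ℕ) < s then j else j + 1

theorem br_update_skipExp_eq_Ls (hs : s ≤ m) :
    br p (Function.update (skipExp (m + 1) s) (Fin.last m) (m + 1)) = Ls p (m + 1) s := by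
  rw [Function.update_eq_self_iff.2 (by simp [skipExp]; omega)]
  rfl

theorem br_update_skipExp_of_ne (hs : s ≤ m) {v : ℕ} (hv : v ≤ m) (hvs : v ≠ s) :
    br p (Function.update (skipExp (m + 1) s) (Fin.last m) v) = 0 := by
  obtain ⟨j, hj, rfl⟩ : ∃ j : Fin (m + 1), j ≠ Fin.last m ∧ skipExp (m + 1) s j = v := by
    refine ⟨⟨if v < s then v else v - 1, by split_ifs <;> omega⟩, ?_, ?_⟩
    · simp only [ne_eq, Fin.ext_iff, Fin.val_last]
      split_ifs <;> omega
    · simp only [skipExp]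
      split_ifs <;> omega
  exact br_update_eq_zero _ hj

theorem br_update_skipExp_self (hs : s ≤ m) :
    br p (Function.update (skipExp (m + 1) s) (Fin.last m) s) =
      (-1) ^ (m - s) * Lpoly p (m + 1) := by
  set σ := Fin.cycleIcc (⟨s, by omega⟩ : Fin (m + 1)) (Fin.last m)
  have hσ : Function.update (skipExp (m + 1) s) (Fin.last m) s =
      (fun j : Fin (m + 1) => (j : ℕ)) ∘ σ := by
    funext j
    rcases eq_or_ne j (Fin.last m) with rfl | hj
    · simp [σ, Fin.cycleIcc_of_last (Fin.le_last _)]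
    have hjm : (j : ℕ) < m := Fin.val_lt_last hj
    rw [Function.update_of_ne hj, Function.comp_apply, skipExp]
    split_ifs with hjs
    · rw [Fin.cycleIcc_of_lt (Fin.lt_def.2 hjs)]
    · have hj' : j < Fin.last m := Fin.lt_def.2 (by simpa using hjm)
      rw [Fin.cycleIcc_of_ge_of_lt (Fin.le_def.2 (by simp; omega)) hj']
      simp [Fin.val_add_one_of_lt hj']
  rw [hσ, br_comp_perm, Fin.sign_cycleIcc_of_le (Fin.le_last _), Units.smul_def]
  simp [Lpoly]

theorem sum_mul_br_update_skipExp (hs : s ≤ m) (f : ℕ → MvPolynomial (Fin (m + 1)) (ZMod p)) :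
    ∑ t ∈ range (m + 1), f t * br p (Function.update (skipExp (m + 1) s) (Fin.last m) t) =
      f s * ((-1) ^ (m - s) * Lpoly p (m + 1)) := by
  rw [sum_eq_single s, br_update_skipExp_self hs]
  · intro t ht hts
    rw [br_update_skipExp_of_ne hs (Nat.lt_succ_iff.1 (mem_range.1 ht)) hts, mul_zero]
  · intro h
    exact absurd (mem_range.2 (Nat.lt_succ_of_le hs)) h

theorem br_update_skipExp_add (hp : p.Prime) {Q : ℤ → MvPolynomial (Fin (m + 1)) (ZMod p)}
    (hQ : ∀ t : ℕ, t < m + 1 → Lpoly p (m + 1) * Q t = Ls p (m + 1) t)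
    (hQneg : ∀ t < 0, Q t = 0) (hs : s ≤ m) (k : ℕ) :
    br p (Function.update (skipExp (m + 1) s) (Fin.last m) (m + 1 + k)) =
      (-1) ^ k * Q (s - k) ^ p ^ k * Lpoly p (m + 1) +
        ∑ t ∈ range k, (-1) ^ (t + k + 1) * Q ((m + 1 + t : ℕ) - k) ^ p ^ k *
          br p (Function.update (skipExp (m + 1) s) (Fin.last m) (m + 1 + t)) := by
  rw [br_update_add_eq_sum hp hQ hQneg, sum_range_add, sum_mul_br_update_skipExp hs]
  have hsign : (-1 : MvPolynomial (Fin (m + 1)) (ZMod p)) ^ (m + 1 + s + k + 1) * (-1) ^ (m - s) =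
      (-1) ^ k := by
    rw [← pow_add, show m + 1 + s + k + 1 + (m - s) = k + 2 * (m + 1) by omega, pow_add _ k,
      pow_mul, neg_one_sq, one_pow, mul_one]
  refine congrArg₂ (· + ·) ?_ ?_
  · linear_combination (Q (s - k) ^ p ^ k * Lpoly p (m + 1)) * hsign
  · refine sum_congr rfl fun t _ => ?_
    rw [show m + 1 + (m + 1 + t) + k + 1 = t + k + 1 + 2 * (m + 1) by ring, pow_add _ _ (2 * _),
      pow_mul, neg_one_sq, one_pow, mul_one]

end SkipExp

theorem stmt9_general (p n s : ℕ) (hp : p.Prime) (hs : s < n)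
    (Qe : ℤ → MvPolynomial (Fin n) (ZMod p))
    (hQe : ∀ t : ℤ, 0 ≤ t → t < n → Lpoly p n * Qe t = Ls p n t.toNat)
    (hQneg : ∀ t : ℤ, t < 0 → Qe t = 0) :
    br p (fun j : Fin n =>
        if (j : ℕ) < s then (j : ℕ) else if (j : ℕ) + 1 < n then (j : ℕ) + 1 else n + 2) =
      Lpoly p n *
        ((Qe ((n : ℤ) - 1)) ^ (p ^ 2 + p) * Qe s - (Qe ((n : ℤ) - 2)) ^ (p ^ 2) * Qe s +
          (Qe ((s : ℤ) - 2)) ^ (p ^ 2) - (Qe ((s : ℤ) - 1)) ^ p * (Qe ((n : ℤ) - 1)) ^ (p ^ 2)) := by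
  obtain ⟨m, rfl⟩ : ∃ m, n = m + 1 := ⟨n - 1, by omega⟩
  have hQ (t : ℕ) (ht : t < m + 1) : Lpoly p (m + 1) * Qe t = Ls p (m + 1) t := by
    simpa using hQe t (by positivity) (by exact_mod_cast ht)
  have hsm : s ≤ m := Nat.lt_succ_iff.1 hs
  have hB0 := (br_update_skipExp_eq_Ls (p := p) hsm).trans (hQ s hs).symm
  have hB1 := br_update_skipExp_add hp hQ hQneg hsm 1
  have hB2 := br_update_skipExp_add hp hQ hQneg hsm 2
  simp only [sum_range_succ, sum_range_zero, zero_add, add_zero] at hB1 hB2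
  have htarget : (fun j : Fin (m + 1) =>
      if (j : ℕ) < s then (j : ℕ)
      else if (j : ℕ) + 1 < m + 1 then (j : ℕ) + 1 else m + 1 + 2) =
      Function.update (skipExp (m + 1) s) (Fin.last m) (m + 1 + 2) := by
    funext j
    rcases eq_or_ne j (Fin.last m) with rfl | hj
    · simp only [Fin.val_last, Function.update_self, lt_self_iff_false, if_false]
      rw [if_neg (by omega)]
    · have hjm : (j : ℕ) < m := Fin.val_lt_last hj
      simp [Function.update_of_ne hj, skipExp, hjm]
  rw [htarget, hB2, hB1, hB0]
  push_cast
  rw [show (m : ℤ) + 1 + 1 - 2 = m + 1 - 1 by ring]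
  ring

/-- For `0 ≤ s < n`:
`[0,…,ŝ,…,n-1, n+2] = L_n · (Q_{n,n-1}^{p²+p} Q_{n,s} − Q_{n,n-2}^{p²} Q_{n,s}
  + Q_{n,s-2}^{p²} − Q_{n,s-1}^p Q_{n,n-1}^{p²})`, with `Q_{n,t} = 0` for `t < 0`
and `Q_{n,n} = 1`.  `Qe : ℤ → _` encodes the Dickson invariants with these conventions. -/
theorem stmt9 (p n s : ℕ) (hp : p.Prime) (hodd : Odd p) (hs : s < n)
    (Qe : ℤ → MvPolynomial (Fin n) (ZMod p))
    (hQe : ∀ t : ℤ, 0 ≤ t → t < n → Lpoly p n * Qe t = Ls p n t.toNat)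
    (hQneg : ∀ t : ℤ, t < 0 → Qe t = 0) (hQn : Qe (n : ℤ) = 1) :
    br p (fun j : Fin n =>
        if (j : ℕ) < s then (j : ℕ) else if (j : ℕ) + 1 < n then (j : ℕ) + 1 else n + 2) =
      Lpoly p n *
        ((Qe ((n : ℤ) - 1)) ^ (p ^ 2 + p) * Qe s - (Qe ((n : ℤ) - 2)) ^ (p ^ 2) * Qe s +
          (Qe ((s : ℤ) - 2)) ^ (p ^ 2) - (Qe ((s : ℤ) - 1)) ^ p * (Qe ((n : ℤ) - 1)) ^ (p ^ 2)) :=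
  stmt9_general p n s hp hs Qe hQe hQneg
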